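/- Let X and Y be finite sets, {ρ_x}_{x∈X} d×d density matrices, π a probability distribution on X, {M_y}_{y∈Y} a POVM, with ρ̄ = Σ_x π_x ρ_x invertible. With the dual pair M'_x = π_x ρ̄^{−1/2} ρ_x ρ̄^{−1/2}, π'_y = Tr(ρ̄ M_y), ρ'_y = ρ̄^{1/2} M_y ρ̄^{1/2}/π'_y (for π'_y > 0), the joint distributions of the two pairs coincide: for all x ∈ X and y ∈ Y, π_x · Tr(ρ_x M_y) = π'_y · Tr(ρ'_y M'_x) (both sides being 0 when π'_y = 0). Consequently the Shannon mutual informations coincide: I(𝓔, 𝓜) = I(𝓔', 𝓜'), where for a joint probability mass function P(x,y) the mutual information is Σ_{x,y} P(x,y) log(P(x,y)/(P(x,·)P(·,y))). -/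

import Mathlib

/-!
With `S = ρ̄^{1/2}` invertible, cyclicity of the trace gives
`Tr((S M_y S)(S⁻¹ ρ_x S⁻¹)) = Tr(ρ_x M_y)`, so `π'_y Tr(ρ'_y M'_x) = π_x Tr(ρ_x M_y)` as soon as
`π'_y ≠ 0`. Since `π'_y = Σ_x π_x Tr(ρ_x M_y)` is a sum of nonnegative terms (the trace of a
product of positive semidefinite matrices is nonnegative), `π'_y = 0` forces the left-hand side
to vanish as well. Equal joint distributions have equal mutual information.
-/

open Matrix
open scoped ComplexOrder Classical BigOperators

/-- The (Hermitian positive semidefinite) square root of a positive semidefinite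
complex matrix; junk value `0` if the matrix is not positive semidefinite. -/
noncomputable def msqrt {d : ℕ} (A : Matrix (Fin d) (Fin d) ℂ) :
    Matrix (Fin d) (Fin d) ℂ :=
  if h : A.PosSemidef then
    (h.1.eigenvectorUnitary : Matrix (Fin d) (Fin d) ℂ) *
      diagonal ((↑) ∘ (Real.sqrt ·) ∘ h.1.eigenvalues) *
      (star h.1.eigenvectorUnitary : Matrix (Fin d) (Fin d) ℂ) else 0

/-- Shannon mutual information of a joint probability mass function `P` on
`X × Y`: `Σ_{x,y} P(x,y) log (P(x,y)/(P(x,·) P(·,y)))`. -/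
noncomputable def mutInfo {X Y : Type*} [Fintype X] [Fintype Y]
    (P : X → Y → ℝ) : ℝ :=
  ∑ x, ∑ y, P x y * Real.log (P x y / ((∑ y', P x y') * (∑ x', P x' y)))

open scoped MatrixOrder

theorem msqrt_eq_cfcSqrt {d : ℕ} {A : Matrix (Fin d) (Fin d) ℂ} (hA : A.PosSemidef) :
    msqrt A = CFC.sqrt A := by
  rw [CFC.sqrt_eq_real_sqrt A hA.nonneg, cfcₙ_eq_cfc, hA.1.cfc_eq, msqrt, dif_pos hA]
  rfl

theorem msqrt_mul_self {d : ℕ} {A : Matrix (Fin d) (Fin d) ℂ} (hA : A.PosSemidef) :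
    msqrt A * msqrt A = A := by
  rw [msqrt_eq_cfcSqrt hA, CFC.sqrt_mul_sqrt_self A hA.nonneg]

theorem Matrix.PosSemidef.trace_mul_nonneg {n 𝕜 : Type*} [Fintype n] [RCLike 𝕜]
    {A B : Matrix n n 𝕜} (hA : A.PosSemidef) (hB : B.PosSemidef) : 0 ≤ (A * B).trace := by
  classical
  obtain ⟨S, rfl⟩ := CStarAlgebra.nonneg_iff_eq_star_mul_self.mp hB.nonneg
  rw [star_eq_conjTranspose, ← Matrix.mul_assoc, trace_mul_comm]
  simpa [Matrix.mul_assoc] using (hA.mul_mul_conjTranspose_same S).trace_nonneg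

theorem Matrix.trace_conj_mul_inv_conj {n R : Type*} [Fintype n] [DecidableEq n] [CommRing R]
    {S : Matrix n n R} (hS : IsUnit S.det) (A B : Matrix n n R) :
    ((S * A * S) * (S⁻¹ * B * S⁻¹)).trace = (B * A).trace := by
  calc ((S * A * S) * (S⁻¹ * B * S⁻¹)).trace = (S * (A * B) * S⁻¹).trace := by
        simp only [Matrix.mul_assoc, mul_nonsing_inv_cancel_left _ _ hS]
    _ = (B * A).trace := by
        rw [trace_mul_cycle, nonsing_inv_mul _ hS, Matrix.one_mul, trace_mul_comm]

/-- At `p = 0` this holds through the convention `0⁻¹ = 0`, the one that gives `ρ'_y = 0`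
when `π'_y = 0`. -/
theorem eq_mul_inv_mul_of_nonneg_of_le {K : Type*} [Field K] [LinearOrder K]
    [IsStrictOrderedRing K] {a p : K} (ha : 0 ≤ a) (hap : a ≤ p) :
    a = p * (p⁻¹ * a) := by
  rcases eq_or_ne p 0 with rfl | hp
  · linarith
  · rw [mul_inv_cancel_left₀ hp]

theorem stmt16_general {X Y : Type*} [Fintype X] [Fintype Y] {d : ℕ}
    (ρ : X → Matrix (Fin d) (Fin d) ℂ)
    (hρ : ∀ x, (ρ x).PosSemidef)
    (π : X → ℝ) (hπ : ∀ x, 0 ≤ π x)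
    (M : Y → Matrix (Fin d) (Fin d) ℂ)
    (hM : ∀ y, (M y).PosSemidef)
    (ρbar : Matrix (Fin d) (Fin d) ℂ) (hbar : ρbar = ∑ x, (π x : ℂ) • ρ x)
    (hinv : IsUnit ρbar.det)
    (M' : X → Matrix (Fin d) (Fin d) ℂ)
    (hM' : M' = fun x => (π x : ℂ) • ((msqrt ρbar)⁻¹ * ρ x * (msqrt ρbar)⁻¹))
    (π' : Y → ℝ) (hπ' : π' = fun y => ((ρbar * M y).trace).re)
    (ρ' : Y → Matrix (Fin d) (Fin d) ℂ)
    (hρ' : ρ' = fun y => ((π' y : ℂ))⁻¹ • (msqrt ρbar * M y * msqrt ρbar)) :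
    (∀ x y, π x * ((ρ x * M y).trace).re = π' y * ((ρ' y * M' x).trace).re) ∧
    mutInfo (fun x y => π x * ((ρ x * M y).trace).re)
      = mutInfo (fun x y => π' y * ((ρ' y * M' x).trace).re) := by
  have hbarP : ρbar.PosSemidef :=
    hbar ▸ posSemidef_sum _ fun x _ => (hρ x).smul (by exact_mod_cast hπ x)
  have hSdet : IsUnit (msqrt ρbar).det :=
    isUnit_of_mul_isUnit_left (by rwa [← det_mul, msqrt_mul_self hbarP])
  have hjoint_nonneg : ∀ x y, 0 ≤ π x * ((ρ x * M y).trace).re := fun x y =>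
    mul_nonneg (hπ x) (Complex.nonneg_iff.mp ((hρ x).trace_mul_nonneg (hM y))).1
  have hπ'_eq : ∀ y, π' y = ∑ x, π x * ((ρ x * M y).trace).re := fun y => by
    simp [hπ', hbar, Matrix.sum_mul, trace_sum, Complex.re_sum]
  have joint : ∀ x y, π x * ((ρ x * M y).trace).re = π' y * ((ρ' y * M' x).trace).re := by
    intro x y
    have htr : ((ρ' y * M' x).trace).re = (π' y)⁻¹ * (π x * ((ρ x * M y).trace).re) := by
      simp only [hρ', hM', smul_mul_smul, trace_smul, trace_conj_mul_inv_conj hSdet,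
        smul_eq_mul]
      rw [← Complex.ofReal_inv, ← Complex.ofReal_mul, Complex.re_ofReal_mul, mul_assoc]
    rw [htr]
    exact eq_mul_inv_mul_of_nonneg_of_le (hjoint_nonneg x y)
      (hπ'_eq y ▸ Finset.single_le_sum (fun x _ => hjoint_nonneg x y) (Finset.mem_univ x))
  exact ⟨joint, congrArg mutInfo (funext₂ joint)⟩

/-- Finite-dimensional ensemble–observable duality (Proposition 1, equality
(II)): the joint distributions of the pair `(𝓔, 𝓜)` and of the dual pair
`(𝓔', 𝓜')` coincide, `π_x Tr(ρ_x M_y) = π'_y Tr(ρ'_y M'_x)` (both sides being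
`0` when `π'_y = 0`), hence their Shannon mutual informations coincide. -/
theorem stmt16 {X Y : Type*} [Fintype X] [Fintype Y] {d : ℕ}
    (ρ : X → Matrix (Fin d) (Fin d) ℂ)
    (hρ : ∀ x, (ρ x).PosSemidef) (hρtr : ∀ x, (ρ x).trace = 1)
    (π : X → ℝ) (hπ : ∀ x, 0 ≤ π x) (hπ1 : ∑ x, π x = 1)
    (M : Y → Matrix (Fin d) (Fin d) ℂ)
    (hM : ∀ y, (M y).PosSemidef) (hM1 : ∑ y, M y = 1)
    (ρbar : Matrix (Fin d) (Fin d) ℂ) (hbar : ρbar = ∑ x, (π x : ℂ) • ρ x)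
    (hinv : IsUnit ρbar.det)
    (M' : X → Matrix (Fin d) (Fin d) ℂ)
    (hM' : M' = fun x => (π x : ℂ) • ((msqrt ρbar)⁻¹ * ρ x * (msqrt ρbar)⁻¹))
    (π' : Y → ℝ) (hπ' : π' = fun y => ((ρbar * M y).trace).re)
    (ρ' : Y → Matrix (Fin d) (Fin d) ℂ)
    (hρ' : ρ' = fun y => ((π' y : ℂ))⁻¹ • (msqrt ρbar * M y * msqrt ρbar)) :
    (∀ x y, π x * ((ρ x * M y).trace).re = π' y * ((ρ' y * M' x).trace).re) ∧
    mutInfo (fun x y => π x * ((ρ x * M y).trace).re)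
      = mutInfo (fun x y => π' y * ((ρ' y * M' x).trace).re) :=
  stmt16_general ρ hρ π hπ M hM ρbar hbar hinv M' hM' π' hπ' ρ' hρ'
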